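/- arXiv:1409.7198 — 5 statements merged into one kernel-verified Lean document; each statement's English description precedes it below -/
import Mathlib

section
/- Let n be a positive integer and let u : ZMod n → ℝ be a ±1 vector generating a circulant Hadamard matrix. Define M : (ZMod n → ZMod 2) → ℝ by M(γ) = u^γ. Then M satisfies the circulant system: for every γ : ZMod n → ZMod 2 and every integer d with 1 ≤ d ≤ ⌊n/2⌋, ∑_{j ∈ ZMod n} M(γ + π_j + π_{j+d}) = 0. -/
/-- `u` generates a circulant Hadamard matrix: all entries are `±1` and all
non-trivial cyclic autocorrelations vanish. -/
def GeneratesCircHadamard (n : ℕ) [NeZero n] (u : ZMod n → ℝ) : Prop :=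
  (∀ j, u j = 1 ∨ u j = -1) ∧
    ∀ d : ℕ, 1 ≤ d → d ≤ n - 1 → ∑ j : ZMod n, u j * u (j + (d : ZMod n)) = 0

/-- `π_j`, the indicator character of `{j}`. -/
def piChar (n : ℕ) (j : ZMod n) : ZMod n → ZMod 2 :=
  fun i => if i = j then 1 else 0

/-- `u^γ = ∏_{j : γ j = 1} u j`. -/
def uPow (n : ℕ) [NeZero n] (u : ZMod n → ℝ) (γ : ZMod n → ZMod 2) : ℝ :=
  ∏ j : ZMod n, if γ j = 1 then u j else 1

/-! Adding `π_a` to `γ` multiplies `u^γ` by `u_a`, because `u_a² = 1`. Hence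
`u^(γ + π_j + π_{j+d}) = u^γ · u_j u_{j+d}`, and summing over `j` factors out `u^γ` and leaves the
autocorrelation of `u` at shift `d ≤ n - 1`, which vanishes. -/

open Finset

lemma ite_add_one_eq_one_mul {x : ZMod 2} {a : ℝ} (ha : a * a = 1) :
    (if x + 1 = 1 then a else 1) = (if x = 1 then a else 1) * a := by
  rcases (by decide : ∀ y : ZMod 2, y = 0 ∨ y = 1) x with rfl | rfl
  · simp
  · simp [ha, (by decide : (1 + 1 : ZMod 2) ≠ 1)]

lemma uPow_add_piChar {n : ℕ} [NeZero n] {u : ZMod n → ℝ} {a : ZMod n} (hua : u a * u a = 1)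
    (γ : ZMod n → ZMod 2) : uPow n u (γ + piChar n a) = uPow n u γ * u a := by
  unfold uPow
  rw [← mul_prod_erase _ _ (mem_univ a), ← mul_prod_erase _ _ (mem_univ a),
    mul_right_comm]
  congr 1
  · simpa [piChar] using ite_add_one_eq_one_mul hua
  · refine prod_congr rfl fun j hj => ?_
    simp [piChar, ne_of_mem_erase hj]

/-- If `u` generates a circulant Hadamard matrix, then `M(γ) = u^γ` satisfies
the circulant system: for every character `γ` and every `1 ≤ d ≤ ⌊n/2⌋`,
`∑_j M(γ + π_j + π_{j+d}) = 0`. -/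
theorem uPow_satisfies_circulant_system (n : ℕ) [NeZero n]
    (u : ZMod n → ℝ) (hu : GeneratesCircHadamard n u) :
    ∀ γ : ZMod n → ZMod 2, ∀ d : ℕ, 1 ≤ d → d ≤ n / 2 →
      ∑ j : ZMod n,
        uPow n u (γ + piChar n j + piChar n (j + (d : ZMod n))) = 0 := by
  obtain ⟨hpm, hauto⟩ := hu
  intro γ d hd hdn
  have hsq (j : ZMod n) : u j * u j = 1 := by rcases hpm j with h | h <;> simp [h]
  calc ∑ j : ZMod n, uPow n u (γ + piChar n j + piChar n (j + (d : ZMod n)))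
      = ∑ j : ZMod n, uPow n u γ * (u j * u (j + (d : ZMod n))) := by
        refine sum_congr rfl fun j _ => ?_
        rw [uPow_add_piChar (hsq _), uPow_add_piChar (hsq _), mul_assoc]
    _ = 0 := by rw [← mul_sum, hauto d hd (by omega), mul_zero]
end

section
/- Let n be a positive integer and let u : ZMod n → ℝ be a ±1 vector generating a circulant Hadamard matrix. Define M : (ZMod n → ZMod 2) → ℝ by M(γ) = u^γ. Then for every γ : ZMod n → ZMod 2 one has ∑_{ρ : ZMod n → ZMod 2} M(γ + ρ) · S(ρ) = 0, i.e. the convolution S ∗ M vanishes identically. -/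
/-- The coefficient function `S`:
`S(γ) = ∑_{d=1}^{n-1} #{(j,k) : π_j + π_{j+d} + π_k + π_{k+d} = γ}`. -/
def Sfun (n : ℕ) [NeZero n] (γ : ZMod n → ZMod 2) : ℝ :=
  ∑ d ∈ Finset.Icc 1 (n - 1),
    ((Finset.univ.filter fun jk : ZMod n × ZMod n =>
        piChar n jk.1 + piChar n (jk.1 + (d : ZMod n)) +
          piChar n jk.2 + piChar n (jk.2 + (d : ZMod n)) = γ).card : ℝ)

/-!
Since `u j ^ 2 = 1`, `γ ↦ u^γ` is a character of `(ZMod n → ZMod 2, +)`: `u^(γ + ρ) = u^γ u^ρ`.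
Hence `∑_ρ u^(γ + ρ) S(ρ) = u^γ ∑_ρ u^ρ S(ρ)`, and the last sum is, by the defining property of
`S`, the sum of the squared nontrivial autocorrelations `∑_j u_j u_{j+d}`, all of which vanish.
-/

open Finset

lemma Fintype.sum_mul_card_fiber {α β R : Type*} [Fintype α] [Fintype β] [DecidableEq β]
    [NonAssocSemiring R] (f : β → R) (g : α → β) :
    ∑ b, f b * #{a | g a = b} = ∑ a, f (g a) := by
  rw [← Finset.sum_fiberwise' univ g f]
  simp only [sum_const, nsmul_eq_mul]
  exact Finset.sum_congr rfl fun _ _ => (Nat.cast_comm _ _).symm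

section

variable {n : ℕ} [NeZero n] {u : ZMod n → ℝ}

lemma uPow_add (hu : ∀ j, u j ^ 2 = 1) (γ ρ : ZMod n → ZMod 2) :
    uPow n u (γ + ρ) = uPow n u γ * uPow n u ρ := by
  rw [uPow, uPow, uPow, ← prod_mul_distrib]
  refine prod_congr rfl fun j _ => ?_
  have hbit : ∀ a : ZMod 2, a = 0 ∨ a = 1 := by decide
  rcases hbit (γ j) with h | h <;> rcases hbit (ρ j) with h' | h' <;>
    simp [h, h', ← sq, hu j]

lemma uPow_piChar (j : ZMod n) : uPow n u (piChar n j) = u j := by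
  simp [uPow, piChar]

lemma uPow_piChar_four (hu : ∀ j, u j ^ 2 = 1) (j x k y : ZMod n) :
    uPow n u (piChar n j + piChar n x + piChar n k + piChar n y) = u j * u x * (u k * u y) := by
  rw [uPow_add hu, uPow_add hu, uPow_add hu, uPow_piChar, uPow_piChar, uPow_piChar, uPow_piChar]
  ring

lemma sum_uPow_mul_Sfun (hu : ∀ j, u j ^ 2 = 1) :
    ∑ ρ, uPow n u ρ * Sfun n ρ =
      ∑ d ∈ Icc 1 (n - 1), (∑ j, u j * u (j + (d : ZMod n))) ^ 2 := by
  simp_rw [Sfun, mul_sum]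
  rw [sum_comm]
  refine sum_congr rfl fun d _ => ?_
  rw [Fintype.sum_mul_card_fiber (uPow n u), Fintype.sum_prod_type, sq, sum_mul_sum]
  simp only [uPow_piChar_four hu]

end

/-- If `u` generates a circulant Hadamard matrix and `M(γ) = u^γ`, then the
convolution `S ∗ M` vanishes identically:
`∑_ρ M(γ + ρ) S(ρ) = 0` for every `γ`. -/
theorem conv_S_uPow_eq_zero (n : ℕ) [NeZero n]
    (u : ZMod n → ℝ) (hu : GeneratesCircHadamard n u) :
    ∀ γ : ZMod n → ZMod 2,
      ∑ ρ : ZMod n → ZMod 2, uPow n u (γ + ρ) * Sfun n ρ = 0 := by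
  intro γ
  obtain ⟨hpm, hcorr⟩ := hu
  have hsq : ∀ j, u j ^ 2 = 1 := fun j => by rcases hpm j with h | h <;> simp [h]
  calc ∑ ρ, uPow n u (γ + ρ) * Sfun n ρ
      = uPow n u γ * ∑ ρ, uPow n u ρ * Sfun n ρ := by
        simp only [uPow_add hsq, mul_sum, mul_assoc]
    _ = 0 := by
        rw [sum_uPow_mul_Sfun hsq, sum_eq_zero fun d hd => ?_, mul_zero]
        obtain ⟨hd1, hd2⟩ := mem_Icc.mp hd
        rw [hcorr d hd1 hd2, sq, zero_mul]
end

section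
/- Let n be a positive integer. There exists a ±1 vector u : ZMod n → ℝ generating a circulant Hadamard matrix if and only if there exists a function M : (ZMod n → ZMod 2) → ℝ, not identically zero, such that for every γ : ZMod n → ZMod 2 one has ∑_{ρ : ZMod n → ZMod 2} M(γ + ρ) · S(ρ) = 0. -/
/-!
Identify `±1` vectors with their sign patterns `ε : ZMod n → ZMod 2` and Fourier-transform over
the group `ZMod n → ZMod 2` with the real Walsh characters `walsh ε`. At `ε` the transform of
`S` is `∑_d (∑_j u_j u_{j+d})²` for `u = (-1)^ε`, so it vanishes exactly when `u` generates a
circulant Hadamard matrix, and the convolution equation becomes `M̂(ε) Ŝ(ε) = 0` for every `ε`.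
A Hadamard sign pattern `ε` gives the solution `M = walsh ε`, since correlating a character
with `S` multiplies it by `Ŝ(ε)`; conversely, by Fourier inversion a nonzero `M` has
`M̂(ε) ≠ 0` for some `ε`, which forces `Ŝ(ε) = 0`.
-/

open Finset

noncomputable def signChar : AddChar (ZMod 2) ℝ :=
  AddChar.zmodChar 2 (by norm_num : (-1 : ℝ) ^ 2 = 1)

lemma signChar_one : signChar 1 = -1 := by
  simp [signChar, AddChar.zmodChar_apply, ZMod.val_one]

lemma ZMod.eq_zero_or_eq_one_of_two : ∀ a : ZMod 2, a = 0 ∨ a = 1 := by decide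

lemma signChar_eq_one_iff (a : ZMod 2) : signChar a = 1 ↔ a = 0 := by
  rcases a.eq_zero_or_eq_one_of_two with rfl | rfl <;> norm_num [signChar_one]

lemma signChar_eq_one_or_eq_neg_one (a : ZMod 2) : signChar a = 1 ∨ signChar a = -1 := by
  rcases a.eq_zero_or_eq_one_of_two with rfl | rfl <;> simp [signChar_one]

lemma exists_signChar_comp_eq {ι : Type*} (u : ι → ℝ) (hu : ∀ j, u j = 1 ∨ u j = -1) :
    ∃ ε : ι → ZMod 2, (fun j => signChar (ε j)) = u := by
  refine ⟨fun j => if u j = 1 then 0 else 1, funext fun j => ?_⟩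
  rcases hu j with h | h <;> norm_num [h, signChar_one]

section Walsh

variable {ι : Type*}

lemma add_self_eq_zero_of_zmod_two (γ : ι → ZMod 2) : γ + γ = 0 :=
  funext fun j => CharTwo.add_self_eq_zero (γ j)

lemma add_eq_zero_iff_eq_of_zmod_two {γ δ : ι → ZMod 2} : γ + δ = 0 ↔ γ = δ := by
  rw [add_eq_zero_iff_eq_neg, neg_eq_of_add_eq_zero_right (add_self_eq_zero_of_zmod_two δ)]

variable [Fintype ι]

noncomputable def walsh (ε : ι → ZMod 2) : AddChar (ι → ZMod 2) ℝ where
  toFun γ := ∏ j, signChar (ε j * γ j)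
  map_zero_eq_one' := by simp
  map_add_eq_mul' γ δ := by
    simp only [Pi.add_apply, mul_add, AddChar.map_add_eq_mul, prod_mul_distrib]

lemma walsh_apply (ε γ : ι → ZMod 2) : walsh ε γ = ∏ j, signChar (ε j * γ j) := rfl

lemma walsh_comm (ε γ : ι → ZMod 2) : walsh ε γ = walsh γ ε := by
  simp only [walsh_apply, mul_comm]

variable [DecidableEq ι]

lemma walsh_single (ε : ι → ZMod 2) (j : ι) : walsh ε (Pi.single j 1) = signChar (ε j) := by
  rw [walsh_apply, Fintype.prod_eq_single j fun i hi => by simp [hi]]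
  simp

lemma walsh_eq_zero_iff (ε : ι → ZMod 2) : walsh ε = 0 ↔ ε = 0 := by
  refine ⟨fun h => funext fun j => ?_, fun h => ?_⟩
  · rw [Pi.zero_apply, ← signChar_eq_one_iff, ← walsh_single, h, AddChar.zero_apply]
  · ext γ
    simp [h, walsh_apply]

lemma sum_walsh_apply (γ : ι → ZMod 2) :
    ∑ ε, walsh ε γ = if γ = 0 then (Fintype.card (ι → ZMod 2) : ℝ) else 0 := by
  simp_rw [walsh_comm _ γ]
  rw [AddChar.sum_eq_ite]
  exact if_congr (walsh_eq_zero_iff γ) rfl rfl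

noncomputable def walshTransform (M : (ι → ZMod 2) → ℝ) (ε : ι → ZMod 2) : ℝ :=
  ∑ γ, M γ * walsh ε γ

lemma sum_walsh_mul_walshTransform (M : (ι → ZMod 2) → ℝ) (δ : ι → ZMod 2) :
    ∑ ε, walsh ε δ * walshTransform M ε = Fintype.card (ι → ZMod 2) * M δ := by
  have hsum (γ : ι → ZMod 2) : ∑ ε, walsh ε δ * walsh ε γ =
      if δ = γ then (Fintype.card (ι → ZMod 2) : ℝ) else 0 := by
    simp_rw [← AddChar.map_add_eq_mul, sum_walsh_apply, add_eq_zero_iff_eq_of_zmod_two]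
  calc ∑ ε, walsh ε δ * walshTransform M ε
      = ∑ ε, ∑ γ, M γ * (walsh ε δ * walsh ε γ) := by
        refine sum_congr rfl fun ε _ => ?_
        rw [walshTransform, mul_sum]
        exact sum_congr rfl fun γ _ => by ring
    _ = ∑ γ, M γ * ∑ ε, walsh ε δ * walsh ε γ := by
        rw [sum_comm]
        simp only [mul_sum]
    _ = Fintype.card (ι → ZMod 2) * M δ := by simp [hsum, mul_comm]

lemma eq_zero_of_walshTransform_eq_zero {M : (ι → ZMod 2) → ℝ}
    (hM : ∀ ε, walshTransform M ε = 0) : M = 0 := by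
  funext δ
  have h := sum_walsh_mul_walshTransform M δ
  simp only [hM, mul_zero, sum_const_zero] at h
  exact (mul_eq_zero.1 h.symm).resolve_left (by positivity)

lemma sum_walsh_add_mul (ε γ : ι → ZMod 2) (S : (ι → ZMod 2) → ℝ) :
    ∑ ρ, walsh ε (γ + ρ) * S ρ = walsh ε γ * walshTransform S ε := by
  simp only [walshTransform, mul_sum, AddChar.map_add_eq_mul]
  exact sum_congr rfl fun _ _ => by ring

lemma walshTransform_correlation (M S : (ι → ZMod 2) → ℝ) (ε : ι → ZMod 2) :
    walshTransform (fun γ => ∑ ρ, M (γ + ρ) * S ρ) ε =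
      walshTransform M ε * walshTransform S ε := by
  have hshift (ρ : ι → ZMod 2) :
      ∑ γ, M (γ + ρ) * walsh ε γ = walsh ε ρ * walshTransform M ε := by
    rw [← sum_walsh_add_mul]
    refine Fintype.sum_equiv (Equiv.addRight ρ) _ _ fun γ => ?_
    show M (γ + ρ) * walsh ε γ = walsh ε (ρ + (γ + ρ)) * M (γ + ρ)
    rw [add_left_comm, add_self_eq_zero_of_zmod_two, add_zero, mul_comm]
  calc walshTransform (fun γ => ∑ ρ, M (γ + ρ) * S ρ) ε
      = ∑ ρ, S ρ * ∑ γ, M (γ + ρ) * walsh ε γ := by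
        simp only [walshTransform, sum_mul, mul_sum]
        rw [sum_comm]
        exact sum_congr rfl fun _ _ => sum_congr rfl fun _ _ => by ring
    _ = ∑ ρ, S ρ * walsh ε ρ * walshTransform M ε :=
        sum_congr rfl fun ρ _ => by rw [hshift]; ring
    _ = walshTransform M ε * walshTransform S ε := by rw [← sum_mul, mul_comm]; rfl

end Walsh

section CircHadamard

variable {n : ℕ} [NeZero n]

lemma walsh_piChar (ε : ZMod n → ZMod 2) (j : ZMod n) :
    walsh ε (piChar n j) = signChar (ε j) := by
  have : piChar n j = Pi.single j 1 := funext fun i => by simp [piChar, Pi.single_apply]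
  rw [this, walsh_single]

lemma walshTransform_Sfun (ε : ZMod n → ZMod 2) :
    walshTransform (Sfun n) ε = ∑ d ∈ Icc 1 (n - 1),
      (∑ j : ZMod n, signChar (ε j) * signChar (ε (j + (d : ZMod n)))) ^ 2 := by
  simp only [walshTransform, Sfun, sum_mul]
  rw [sum_comm]
  refine sum_congr rfl fun d _ => ?_
  set u : ZMod n → ℝ := fun j => signChar (ε j) * signChar (ε (j + (d : ZMod n)))
  set K : ZMod n × ZMod n → (ZMod n → ZMod 2) := fun jk =>
    piChar n jk.1 + piChar n (jk.1 + (d : ZMod n)) + piChar n jk.2 + piChar n (jk.2 + (d : ZMod n))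
  have hK (jk : ZMod n × ZMod n) : walsh ε (K jk) = u jk.1 * u jk.2 := by
    simp only [K, u, AddChar.map_add_eq_mul, walsh_piChar]
    ring
  calc ∑ ρ, ((univ.filter fun jk => K jk = ρ).card : ℝ) * walsh ε ρ
      = ∑ jk, walsh ε (K jk) := by
        rw [← sum_fiberwise' univ K (walsh ε)]
        simp only [sum_const, nsmul_eq_mul]
    _ = (∑ j, u j) ^ 2 := by
        simp only [hK, Fintype.sum_prod_type, sq, sum_mul_sum]

lemma generatesCircHadamard_iff_walshTransform_Sfun_eq_zero (ε : ZMod n → ZMod 2) :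
    GeneratesCircHadamard n (fun j => signChar (ε j)) ↔ walshTransform (Sfun n) ε = 0 := by
  rw [walshTransform_Sfun, sum_eq_zero_iff_of_nonneg fun _ _ => sq_nonneg _]
  simp only [GeneratesCircHadamard, signChar_eq_one_or_eq_neg_one, implies_true, true_and,
    mem_Icc, and_imp, sq_eq_zero_iff]

end CircHadamard

/-- There exists a `±1` vector generating a circulant Hadamard matrix of order
`n` if and only if the convolution equation `S ∗ M ≡ 0` has a solution `M`
which is not identically zero. -/
theorem exists_circHadamard_iff_exists_nontrivial_conv_solution
    (n : ℕ) [NeZero n] :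
    (∃ u : ZMod n → ℝ, GeneratesCircHadamard n u) ↔
      ∃ M : (ZMod n → ZMod 2) → ℝ, M ≠ 0 ∧
        ∀ γ : ZMod n → ZMod 2,
          ∑ ρ : ZMod n → ZMod 2, M (γ + ρ) * Sfun n ρ = 0 := by
  constructor
  · rintro ⟨u, hu⟩
    obtain ⟨ε, rfl⟩ := exists_signChar_comp_eq u hu.1
    have hS := (generatesCircHadamard_iff_walshTransform_Sfun_eq_zero ε).1 hu
    refine ⟨fun γ => walsh ε γ, fun h => by simpa using congrFun h 0, fun γ => ?_⟩
    rw [sum_walsh_add_mul, hS, mul_zero]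
  · rintro ⟨M, hM, hconv⟩
    obtain ⟨ε, hε⟩ : ∃ ε, walshTransform M ε ≠ 0 := by
      by_contra! h
      exact hM (eq_zero_of_walshTransform_eq_zero h)
    have hprod : walshTransform M ε * walshTransform (Sfun n) ε = 0 := by
      rw [← walshTransform_correlation]
      simp only [hconv, walshTransform, zero_mul, sum_const_zero]
    exact ⟨_, (generatesCircHadamard_iff_walshTransform_Sfun_eq_zero ε).2
      ((mul_eq_zero.1 hprod).resolve_left hε)⟩
end

section
/- Let n be a positive integer and let k be an integer coprime to n, so that τ_k : ZMod n → ZMod n, τ_k(j) = k·j, is a bijection. If M : (ZMod n → ZMod 2) → ℝ satisfies the circulant system, then the function M_k defined by M_k(γ) = M(γ ∘ τ_k) also satisfies the circulant system. -/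
/-- The circulant system of homogeneous linear equations for
`M : (ZMod n → ZMod 2) → ℝ`: for every character `γ` and every
`1 ≤ d ≤ ⌊n/2⌋`, `∑_j M(γ + π_j + π_{j+d}) = 0`. -/
def CirculantSystem (n : ℕ) [NeZero n] (M : (ZMod n → ZMod 2) → ℝ) : Prop :=
  ∀ γ : ZMod n → ZMod 2, ∀ d : ℕ, 1 ≤ d → d ≤ n / 2 →
    ∑ j : ZMod n, M (γ + piChar n j + piChar n (j + (d : ZMod n))) = 0

/-!
Multiplication by a unit `u` of `ZMod n` permutes the characters, `π_j ∘ τ_u = π_{u⁻¹ j}`, so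
after reindexing `j ↦ u⁻¹ j` the equation of `M_u` with shift `d` becomes the equation of `M` with
shift `u⁻¹ d`. That shift is nonzero but need not be at most `n / 2`; it is covered anyway because
the shifts `e` and `-e` give the same equation.
-/

lemma piChar_unit_mul {n : ℕ} (u : (ZMod n)ˣ) (j i : ZMod n) :
    piChar n j (u * i) = piChar n (↑u⁻¹ * j) i := by
  simp only [piChar, Units.eq_inv_mul_iff_mul_eq]

lemma natCast_ne_zero_of_le_half {n d : ℕ} (hd1 : 1 ≤ d) (hd2 : d ≤ n / 2) :
    (d : ZMod n) ≠ 0 := by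
  rw [Ne, ZMod.natCast_eq_zero_iff]
  intro hdvd
  have := Nat.le_of_dvd (by omega) hdvd
  omega

lemma sum_piChar_add_neg {n : ℕ} [Fintype (ZMod n)] (M : (ZMod n → ZMod 2) → ℝ)
    (γ : ZMod n → ZMod 2) (e : ZMod n) :
    ∑ j : ZMod n, M (γ + piChar n j + piChar n (j + -e))
      = ∑ j : ZMod n, M (γ + piChar n j + piChar n (j + e)) :=
  (Fintype.sum_equiv (Equiv.addRight e) _ _ fun j => by
    simp only [Equiv.coe_addRight, add_neg_cancel_right, add_right_comm]).symm

namespace CirculantSystem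

variable {n : ℕ} [NeZero n] {M : (ZMod n → ZMod 2) → ℝ}

theorem sum_eq_zero (hM : CirculantSystem n M) (γ : ZMod n → ZMod 2) {e : ZMod n}
    (he : e ≠ 0) : ∑ j : ZMod n, M (γ + piChar n j + piChar n (j + e)) = 0 := by
  have hval : ((e.val : ℕ) : ZMod n) = e := ZMod.natCast_zmod_val e
  have hpos : 1 ≤ e.val := Nat.one_le_iff_ne_zero.mpr ((ZMod.val_ne_zero e).mpr he)
  have hlt : e.val < n := ZMod.val_lt e
  by_cases hle : e.val ≤ n / 2
  · simpa only [hval] using hM γ e.val hpos hle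
  · have hneg : ((n - e.val : ℕ) : ZMod n) = -e := by
      rw [Nat.cast_sub hlt.le, ZMod.natCast_self, hval, zero_sub]
    rw [← sum_piChar_add_neg, ← hneg]
    exact hM γ (n - e.val) (by omega) (by omega)

theorem comp_unit_mul (hM : CirculantSystem n M) (u : (ZMod n)ˣ) :
    CirculantSystem n (fun γ => M (fun i => γ (u * i))) := by
  intro γ d hd1 hd2
  have hd : (↑u⁻¹ * d : ZMod n) ≠ 0 :=
    (Units.mul_right_eq_zero _).not.mpr (natCast_ne_zero_of_le_half hd1 hd2)
  calc ∑ j : ZMod n, M (fun i => (γ + piChar n j + piChar n (j + d)) (u * i))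
      = ∑ j : ZMod n, M ((fun i => γ (u * i)) + piChar n j + piChar n (j + ↑u⁻¹ * d)) :=
        Fintype.sum_equiv (Units.mulLeft u⁻¹) _ _ fun j => by
          congr 1
          funext i
          simp only [Pi.add_apply, piChar_unit_mul, Units.mulLeft_apply, mul_add]
    _ = 0 := hM.sum_eq_zero _ hd

end CirculantSystem

/-- If `k` is coprime to `n` (so that `τ_k : j ↦ k·j` is a bijection of
`ZMod n`) and `M` satisfies the circulant system, then so does
`M_k(γ) = M(γ ∘ τ_k)`. -/
theorem circulantSystem_mul_coprime (n : ℕ) [NeZero n] (k : ℤ)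
    (hk : IsCoprime k (n : ℤ))
    (M : (ZMod n → ZMod 2) → ℝ) (hM : CirculantSystem n M) :
    CirculantSystem n (fun γ => M (fun j => γ ((k : ZMod n) * j))) :=
  hM.comp_unit_mul (ZMod.unitOfIsCoprime k hk)
end

section
/- Let n be an integer with n > 1. If there exists a ±1 vector u : ZMod n → ℝ generating a circulant Hadamard matrix, then n = 4u² for some positive integer u; in particular, n is an even perfect square. -/
/-!
Write `s = ∑ j, u j`. Expanding `s²` as the sum of all autocorrelations of `u`, only the
trivial one survives, so `s² = n`; as `n > 1`, this forces `n ≥ 4`. For distinct `a, b, c`,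
summing `(u (j + a) + u (j + b)) * (u (j + a) + u (j + c))` over `j` again gives `n`, while
every summand is a product of two even integers; hence `4 ∣ n = s²`, so `s` is even and
`n = 4 (s / 2)²`.
-/

open Finset

section Autocorrelation

variable {G R : Type*} [AddCommGroup G] [Fintype G]

theorem sum_mul_add_eq_sum_mul_add_sub [NonUnitalNonAssocSemiring R] (f : G → R) (x y : G) :
    ∑ j, f (j + x) * f (j + y) = ∑ j, f j * f (j + (y - x)) :=
  Fintype.sum_equiv (Equiv.addRight x) _ _ fun j => by
    simp only [Equiv.coe_addRight, add_assoc, add_sub_cancel]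

theorem sq_sum_eq_sum_sum_mul_add [Semiring R] (f : G → R) :
    (∑ j, f j) ^ 2 = ∑ d, ∑ j, f j * f (j + d) := by
  rw [sq, sum_mul_sum, eq_comm, sum_comm]
  refine sum_congr rfl fun j _ => ?_
  exact Fintype.sum_equiv (Equiv.addLeft j) _ (f j * f ·) fun d => rfl

theorem sq_sum_eq_card_of_autocorrelation_eq_zero [Semiring R] {f : G → R}
    (hf : ∀ j, f j * f j = 1) (hcorr : ∀ d ≠ 0, ∑ j, f j * f (j + d) = 0) :
    (∑ j, f j) ^ 2 = Fintype.card G := by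
  rw [sq_sum_eq_sum_sum_mul_add, Fintype.sum_eq_single 0 hcorr]
  simp [hf]

theorem four_dvd_card_of_autocorrelation_eq_zero {f : G → ℤ} (hf : ∀ j, f j = 1 ∨ f j = -1)
    (hcorr : ∀ d ≠ 0, ∑ j, f j * f (j + d) = 0) (hG : 2 < Fintype.card G) :
    4 ∣ Fintype.card G := by
  obtain ⟨a, b, c, hab, hac, hbc⟩ := Fintype.two_lt_card_iff.mp hG
  have hsq (x : G) : f x * f x = 1 := by rcases hf x with h | h <;> simp [h]
  have hodd (x : G) : Odd (f x) := by rcases hf x with h | h <;> simp [h]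
  have hcross {x y : G} (hxy : x ≠ y) : ∑ j, f (j + x) * f (j + y) = 0 := by
    rw [sum_mul_add_eq_sum_mul_add_sub]
    exact hcorr _ (sub_ne_zero.mpr hxy.symm)
  have hsum : ∑ j, (f (j + a) + f (j + b)) * (f (j + a) + f (j + c)) = Fintype.card G := by
    simp only [add_mul, mul_add, sum_add_distrib, hsq, hcross hac, hcross hab.symm, hcross hbc]
    simp
  have hdvd : (4 : ℤ) ∣ ∑ j, (f (j + a) + f (j + b)) * (f (j + a) + f (j + c)) :=
    dvd_sum fun j _ => mul_dvd_mul ((hodd _).add_odd (hodd _)).two_dvd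
      ((hodd _).add_odd (hodd _)).two_dvd
  exact_mod_cast hsum ▸ hdvd

end Autocorrelation

theorem ZMod.forall_ne_zero_of_forall_natCast {n : ℕ} [NeZero n] {P : ZMod n → Prop}
    (h : ∀ d : ℕ, 1 ≤ d → d ≤ n - 1 → P d) (d : ZMod n) (hd : d ≠ 0) : P d := by
  have hval : d.val ≠ 0 := (ZMod.val_ne_zero d).mpr hd
  have := ZMod.val_lt d
  simpa using h d.val (by omega) (by omega)

theorem exists_int_eq_of_forall_eq_one_or_neg_one {ι R : Type*} [Ring R] {u : ι → R}
    (hu : ∀ j, u j = 1 ∨ u j = -1) :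
    ∃ f : ι → ℤ, (∀ j, f j = 1 ∨ f j = -1) ∧ ∀ j, (f j : R) = u j := by
  have (j : ι) : ∃ z : ℤ, (z = 1 ∨ z = -1) ∧ (z : R) = u j := by
    rcases hu j with h | h
    · exact ⟨1, Or.inl rfl, by simp [h]⟩
    · exact ⟨-1, Or.inr rfl, by simp [h]⟩
  choose f hf using this
  exact ⟨f, fun j => (hf j).1, fun j => (hf j).2⟩

theorem GeneratesCircHadamard.exists_int {n : ℕ} [NeZero n] {u : ZMod n → ℝ}
    (hu : GeneratesCircHadamard n u) :
    ∃ f : ZMod n → ℤ, (∀ j, f j = 1 ∨ f j = -1) ∧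
      ∀ d ≠ 0, ∑ j, f j * f (j + d) = 0 := by
  obtain ⟨hpm, hcorr⟩ := hu
  obtain ⟨f, hf, hfu⟩ := exists_int_eq_of_forall_eq_one_or_neg_one hpm
  refine ⟨f, hf, ZMod.forall_ne_zero_of_forall_natCast fun d hd1 hd2 => ?_⟩
  have : ((∑ j, f j * f (j + d) : ℤ) : ℝ) = 0 := by
    push_cast
    simpa only [hfu] using hcorr d hd1 hd2
  exact_mod_cast this

/-- If `n > 1` and a `±1` vector generates a circulant Hadamard matrix of
order `n`, then `n = 4k²` for some positive integer `k`; in particular `n` is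
an even perfect square. -/
theorem circHadamard_order_eq_four_mul_sq (n : ℕ) [NeZero n] (hn : 1 < n)
    (h : ∃ u : ZMod n → ℝ, GeneratesCircHadamard n u) :
    (∃ k : ℕ, 0 < k ∧ n = 4 * k ^ 2) ∧ Even n ∧ ∃ m : ℕ, n = m ^ 2 := by
  obtain ⟨u, hu⟩ := h
  obtain ⟨f, hf, hcorr⟩ := hu.exists_int
  set m := (∑ j, f j).natAbs
  have hm : m ^ 2 = n := by
    have hsq := sq_sum_eq_card_of_autocorrelation_eq_zero
      (fun j => by rcases hf j with h | h <;> simp [h]) hcorr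
    rw [ZMod.card] at hsq
    exact_mod_cast (Int.natAbs_sq _).trans hsq
  have hm2 : 2 ≤ m := by
    by_contra! hlt
    interval_cases m <;> omega
  have h4 : 4 ∣ n := by
    simpa using four_dvd_card_of_autocorrelation_eq_zero hf hcorr (by simp; nlinarith)
  obtain ⟨k, hk⟩ : 2 ∣ m := (Nat.pow_dvd_pow_iff two_ne_zero).mp (hm ▸ h4)
  refine ⟨⟨k, by omega, by rw [← hm, hk]; ring⟩, ⟨2 * k ^ 2, by rw [← hm, hk]; ring⟩,
    m, hm.symm⟩
end
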